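/- arXiv:1912.06106 — 5 statements merged into one kernel-verified Lean document; each statement's English description precedes it below -/
import Mathlib

section
/- For every ν ∈ ℝ³ with |ν| = 1, the real 3×6 matrix (A'_ν | A''_ν), obtained by juxtaposing the columns of A'_ν and A''_ν, has rank 3. -/
open Matrix

noncomputable def alph (lam mu : ℝ) : ℝ :=
  (2 * Real.sqrt (2 * mu) + Real.sqrt (2 * mu + 3 * lam)) / 3

noncomputable def bet (lam mu : ℝ) : ℝ :=
  (- Real.sqrt (2 * mu) + Real.sqrt (2 * mu + 3 * lam)) / 3

/-- The matrix `A'_ν`. -/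
noncomputable def Ap (lam mu : ℝ) (ν : Fin 3 → ℝ) : Matrix (Fin 3) (Fin 3) ℝ :=
  - !![ν 0 * alph lam mu, ν 0 * bet lam mu, ν 0 * bet lam mu;
       ν 1 * bet lam mu, ν 1 * alph lam mu, ν 1 * bet lam mu;
       ν 2 * bet lam mu, ν 2 * bet lam mu, ν 2 * alph lam mu]

/-- The matrix `A''_ν`. -/
noncomputable def App (mu : ℝ) (ν : Fin 3 → ℝ) : Matrix (Fin 3) (Fin 3) ℝ :=
  (- Real.sqrt mu) • !![ν 1, ν 2, 0; ν 0, 0, ν 2; 0, ν 0, ν 1]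

/-!
The Gram matrix `M Mᵀ` of `M = (A'_ν | A''_ν)` has the rank of `M`. Writing `A'_ν = -diag(ν) B`
with `B = (α - β) I + β J`, the choice of `α, β` gives `(α - β)² = 2μ` and `β (2α + β) = λ`, so
`A'_ν A'_νᵀ = 2μ diag(ν²) + λ ν νᵀ`, while `A''_ν A''_νᵀ = μ (|ν|² I + ν νᵀ - 2 diag(ν²))`.
The diagonal terms cancel: `M Mᵀ = μ |ν|² I + (λ + μ) ν νᵀ`, which is positive definite for
`ν ≠ 0` since `μ > 0` and `3 (λ + μ) = (2μ + 3λ) + μ > 0`.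
-/

theorem posDef_smul_one_add_smul_vecMulVec {n : Type*} [Fintype n] [DecidableEq n] {a b : ℝ}
    (ha : 0 < a) (hb : 0 ≤ b) (v : n → ℝ) : (a • 1 + b • vecMulVec v v).PosDef := by
  refine (PosDef.one.smul ha).add_posSemidef (PosSemidef.smul ?_ hb)
  simpa using posSemidef_vecMulVec_self_star v

section Lame

variable {lam mu : ℝ}

theorem sub_sq_alph_bet (hmu : 0 ≤ mu) : (alph lam mu - bet lam mu) ^ 2 = 2 * mu := by
  rw [← Real.sq_sqrt (by linarith : 0 ≤ 2 * mu)]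
  unfold alph bet
  ring

theorem bet_mul_two_mul_alph_add_bet (hmu : 0 ≤ mu) (hlm : 0 ≤ 2 * mu + 3 * lam) :
    bet lam mu * (2 * alph lam mu + bet lam mu) = lam := by
  have hs := Real.sq_sqrt (by linarith : 0 ≤ 2 * mu)
  have ht := Real.sq_sqrt hlm
  unfold alph bet
  linear_combination (-1 / 3) * hs + (1 / 3) * ht

theorem Ap_mul_transpose (hmu : 0 ≤ mu) (hlm : 0 ≤ 2 * mu + 3 * lam) (ν : Fin 3 → ℝ) :
    Ap lam mu ν * (Ap lam mu ν)ᵀ = (2 * mu) • diagonal (ν * ν) + lam • vecMulVec ν ν := by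
  have hmu' := sub_sq_alph_bet (lam := lam) hmu
  have hlam := bet_mul_two_mul_alph_add_bet hmu hlm
  unfold Ap
  generalize alph lam mu = a at hmu' hlam ⊢
  generalize bet lam mu = b at hmu' hlam ⊢
  subst hlam
  rw [← hmu']
  ext i j
  fin_cases i <;> fin_cases j <;>
    simp [mul_apply, Fin.sum_univ_three, vecMulVec_apply] <;> ring

theorem App_mul_transpose (hmu : 0 ≤ mu) (ν : Fin 3 → ℝ) :
    App mu ν * (App mu ν)ᵀ =
      mu • ((ν ⬝ᵥ ν) • 1 + vecMulVec ν ν - (2 : ℝ) • diagonal (ν * ν)) := by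
  rw [← Real.sq_sqrt hmu]
  ext i j
  fin_cases i <;> fin_cases j <;>
    simp [App, mul_apply, Fin.sum_univ_three, vecMulVec_apply, dotProduct] <;> ring

theorem fromCols_Ap_App_mul_transpose (hmu : 0 ≤ mu) (hlm : 0 ≤ 2 * mu + 3 * lam)
    (ν : Fin 3 → ℝ) :
    fromCols (Ap lam mu ν) (App mu ν) * (fromCols (Ap lam mu ν) (App mu ν))ᵀ =
      (mu * (ν ⬝ᵥ ν)) • 1 + (lam + mu) • vecMulVec ν ν := by
  rw [transpose_fromCols, fromCols_mul_fromRows, Ap_mul_transpose hmu hlm, App_mul_transpose hmu]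
  module

theorem rank_fromCols_Ap_App (hmu : 0 < mu) (hlm : 0 < 2 * mu + 3 * lam)
    {ν : Fin 3 → ℝ} (hν : ν ≠ 0) : (fromCols (Ap lam mu ν) (App mu ν)).rank = 3 := by
  have hνν : 0 < ν ⬝ᵥ ν := by simpa using dotProduct_star_self_pos_iff.2 hν
  have hpos := posDef_smul_one_add_smul_vecMulVec (mul_pos hmu hνν)
    (by linarith : 0 ≤ lam + mu) ν
  rw [← rank_self_mul_transpose, fromCols_Ap_App_mul_transpose hmu.le hlm.le]
  simpa using rank_of_isUnit _ hpos.isUnit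

end Lame

theorem stmt1 (lam mu : ℝ) (hmu : 0 < mu) (hlm : 0 < 2 * mu + 3 * lam) (ν : Fin 3 → ℝ)
    (hν : ν 0 ^ 2 + ν 1 ^ 2 + ν 2 ^ 2 = 1) :
    (Matrix.fromCols (Ap lam mu ν) (App mu ν)).rank = 3 := by
  refine rank_fromCols_Ap_App hmu hlm fun h ↦ ?_
  simp [h] at hν
end

section
/- For every ν ∈ ℝ³ with |ν| = 1, the symmetric real 9×9 matrix A_ν has rank 6, and the kernel of A_ν (the space of x ∈ ℝ⁹ with A_ν x = 0) has dimension 3. -/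
open Matrix

/-- Index type for `9 = 3 + 3 + 3` block vectors/matrices. -/
abbrev I9 := Fin 3 ⊕ (Fin 3 ⊕ Fin 3)

/-- The symmetric `9 × 9` matrix `A_ν` in `3 × 3` block form. -/
noncomputable def Anu (lam mu : ℝ) (ν : Fin 3 → ℝ) : Matrix I9 I9 ℝ :=
  Matrix.fromBlocks 0 (Matrix.fromCols (Ap lam mu ν) (App mu ν))
    (Matrix.fromRows (Ap lam mu ν)ᵀ (App mu ν)ᵀ) 0

/-!
Write `A_ν = [[0, B], [Bᵀ, 0]]` with `B = [A'_ν | A''_ν]` of size `3 × 6`. Everything reduces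
to the injectivity of `Bᵀ`: then `ker A_ν ≅ ker B` via `v ↦ (0, v)`, so
`dim ker A_ν = 6 - rank B = 3` and `rank A_ν = 9 - 3 = 6`.

For `Bᵀ x = 0`: since `α - β = √(2μ)`, the rows of `A'_νᵀ x = 0` read
`√(2μ) ν_j x_j + β ∑ ν_i x_i = 0`; summing them, `α + 2β = √(2μ + 3λ) > 0` forces
`∑ ν_i x_i = 0` and then every `ν_j x_j = 0`. The rows of `A''_νᵀ x = 0` say
`ν_i x_j + ν_j x_i = 0` for `i ≠ j`, so
`x_j = ∑_i ν_i (ν_i x_j) = -∑_{i ≠ j} ν_j (ν_i x_i) = 0` using `|ν| = 1`.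
-/

namespace Matrix

section CommSemiring

variable {R m n : Type*} [CommSemiring R]

variable (m) in
def sumElimZero : (n → R) →ₗ[R] (m ⊕ n → R) :=
  (LinearEquiv.sumArrowLequivProdArrow m n R R).symm.toLinearMap ∘ₗ LinearMap.inr R _ _

@[simp]
lemma sumElimZero_apply (v : n → R) : sumElimZero m v = Sum.elim (0 : m → R) v := by
  ext (i | i) <;> rfl

lemma sumElimZero_injective : Function.Injective (sumElimZero (R := R) (n := n) m) :=
  fun v w h => by simpa using congrArg (· ∘ Sum.inr) h

variable [Fintype m] [Fintype n]

lemma fromBlocks_zero_zero_mulVec_eq_zero_iff (B : Matrix m n R) (C : Matrix n m R)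
    (z : m ⊕ n → R) :
    fromBlocks 0 B C 0 *ᵥ z = 0 ↔
      C *ᵥ (z ∘ Sum.inl) = 0 ∧ B *ᵥ (z ∘ Sum.inr) = 0 := by
  simp only [fromBlocks_mulVec, zero_mulVec, zero_add, add_zero, funext_iff, Sum.forall,
    Sum.elim_inl, Sum.elim_inr, Pi.zero_apply]
  exact and_comm

lemma ker_mulVecLin_fromBlocks_zero_zero (B : Matrix m n R) (C : Matrix n m R)
    (hC : LinearMap.ker C.mulVecLin = ⊥) :
    LinearMap.ker (fromBlocks 0 B C 0).mulVecLin =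
      (LinearMap.ker B.mulVecLin).map (sumElimZero m) := by
  rw [ker_mulVecLin_eq_bot_iff] at hC
  ext z
  simp only [LinearMap.mem_ker, mulVecLin_apply, fromBlocks_zero_zero_mulVec_eq_zero_iff,
    Submodule.mem_map, sumElimZero_apply]
  constructor
  · rintro ⟨hl, hr⟩
    refine ⟨z ∘ Sum.inr, hr, ?_⟩
    ext (i | i)
    · exact (congrFun (hC _ hl) i).symm
    · rfl
  · rintro ⟨v, hv, rfl⟩
    exact ⟨by rw [Sum.elim_comp_inl, mulVec_zero], by rwa [Sum.elim_comp_inr]⟩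

end CommSemiring

section Field

variable {K m n : Type*} [Field K] [Fintype n]

lemma rank_add_finrank_ker_mulVecLin (A : Matrix m n K) :
    A.rank + Module.finrank K (LinearMap.ker A.mulVecLin) = Fintype.card n := by
  rw [rank, LinearMap.finrank_range_add_finrank_ker, Module.finrank_fintype_fun_eq_card]

lemma finrank_ker_mulVecLin_fromBlocks_zero_zero [Fintype m] (B : Matrix m n K)
    (C : Matrix n m K) (hC : LinearMap.ker C.mulVecLin = ⊥) :
    Module.finrank K (LinearMap.ker (fromBlocks 0 B C 0).mulVecLin) =
      Module.finrank K (LinearMap.ker B.mulVecLin) := by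
  rw [ker_mulVecLin_fromBlocks_zero_zero B C hC]
  exact (Submodule.equivMapOfInjective _ sumElimZero_injective _).finrank_eq.symm

end Field

end Matrix

lemma eq_zero_of_sum_sq_eq_one_of_mul_add_mul_eq_zero {R ι : Type*} [CommRing R] [Fintype ι]
    {ν x : ι → R} (hν : ∑ i, ν i ^ 2 = 1) (hdiag : ∀ i, ν i * x i = 0)
    (hoff : ∀ i j, i ≠ j → ν i * x j + ν j * x i = 0) : x = 0 := by
  funext j
  have hterm : ∀ i, ν i * (ν i * x j) = 0 := by
    intro i
    rcases eq_or_ne i j with rfl | hij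
    · rw [hdiag, mul_zero]
    · linear_combination ν i * hoff i j hij - ν j * hdiag i
  calc x j = (∑ i, ν i ^ 2) * x j := by rw [hν, one_mul]
    _ = ∑ i, ν i * (ν i * x j) := by
      rw [Finset.sum_mul]; exact Finset.sum_congr rfl fun i _ => by ring
    _ = 0 := Finset.sum_eq_zero fun i _ => hterm i

lemma Ap_transpose_mulVec_apply (lam mu : ℝ) (ν x : Fin 3 → ℝ) (j : Fin 3) :
    ((Ap lam mu ν)ᵀ *ᵥ x) j =
      -(Real.sqrt (2 * mu) * (ν j * x j) + bet lam mu * ∑ i, ν i * x i) := by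
  fin_cases j <;>
    simp [Ap, alph, bet, mulVec, dotProduct, Fin.sum_univ_three] <;> ring

lemma App_transpose_mulVec (mu : ℝ) (ν x : Fin 3 → ℝ) :
    (App mu ν)ᵀ *ᵥ x = (-Real.sqrt mu) •
      ![ν 1 * x 0 + ν 0 * x 1, ν 2 * x 0 + ν 0 * x 2, ν 2 * x 1 + ν 1 * x 2] := by
  ext j
  fin_cases j <;> simp [App, mulVec, dotProduct, Fin.sum_univ_three] <;> ring

lemma mul_eq_zero_of_Ap_transpose_mulVec_eq_zero {lam mu : ℝ} (hmu : 0 < mu)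
    (hlm : 0 < 2 * mu + 3 * lam) {ν x : Fin 3 → ℝ} (h : (Ap lam mu ν)ᵀ *ᵥ x = 0)
    (j : Fin 3) :
    ν j * x j = 0 := by
  set s := ∑ i, ν i * x i with hs
  have hrow : ∀ j, Real.sqrt (2 * mu) * (ν j * x j) + bet lam mu * s = 0 := fun j =>
    neg_eq_zero.1 (by rw [← Ap_transpose_mulVec_apply, h, Pi.zero_apply])
  have hs0 : s = 0 := by
    have hb : Real.sqrt (2 * mu + 3 * lam) = Real.sqrt (2 * mu) + 3 * bet lam mu := by
      rw [bet]; ring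
    have hsum : Real.sqrt (2 * mu + 3 * lam) * s = 0 := by
      rw [Fin.sum_univ_three] at hs
      linear_combination hrow 0 + hrow 1 + hrow 2 + Real.sqrt (2 * mu) * hs + s * hb
    exact (mul_eq_zero.1 hsum).resolve_left (Real.sqrt_pos.2 hlm).ne'
  have hj := hrow j
  rw [hs0, mul_zero, add_zero] at hj
  exact (mul_eq_zero.1 hj).resolve_left (Real.sqrt_pos.2 (by linarith)).ne'

lemma mul_add_mul_eq_zero_of_App_transpose_mulVec_eq_zero {mu : ℝ} (hmu : 0 < mu)
    {ν x : Fin 3 → ℝ} (h : (App mu ν)ᵀ *ᵥ x = 0) (i j : Fin 3) (hij : i ≠ j) :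
    ν i * x j + ν j * x i = 0 := by
  rw [App_transpose_mulVec, smul_eq_zero, neg_eq_zero,
    or_iff_right (Real.sqrt_pos.2 hmu).ne'] at h
  have h01 := congrFun h 0
  have h02 := congrFun h 1
  have h12 := congrFun h 2
  simp only [Matrix.cons_val, Pi.zero_apply] at h01 h02 h12
  fin_cases i <;> fin_cases j <;> simp at hij ⊢ <;> linarith

lemma ker_mulVecLin_transpose_fromCols_Ap_App {lam mu : ℝ} (hmu : 0 < mu)
    (hlm : 0 < 2 * mu + 3 * lam) {ν : Fin 3 → ℝ} (hν : ν 0 ^ 2 + ν 1 ^ 2 + ν 2 ^ 2 = 1) :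
    LinearMap.ker (fromCols (Ap lam mu ν) (App mu ν))ᵀ.mulVecLin = ⊥ := by
  rw [ker_mulVecLin_eq_bot_iff, transpose_fromCols]
  intro x hx
  rw [fromRows_mulVec, ← Sum.elim_zero_zero, Sum.elim_eq_iff] at hx
  exact eq_zero_of_sum_sq_eq_one_of_mul_add_mul_eq_zero (by rwa [Fin.sum_univ_three])
    (mul_eq_zero_of_Ap_transpose_mulVec_eq_zero hmu hlm hx.1)
    (mul_add_mul_eq_zero_of_App_transpose_mulVec_eq_zero hmu hx.2)

theorem stmt2 (lam mu : ℝ) (hmu : 0 < mu) (hlm : 0 < 2 * mu + 3 * lam) (ν : Fin 3 → ℝ)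
    (hν : ν 0 ^ 2 + ν 1 ^ 2 + ν 2 ^ 2 = 1) :
    (Anu lam mu ν).rank = 6 ∧
      Module.finrank ℝ (LinearMap.ker (Anu lam mu ν).mulVecLin) = 3 := by
  set B := fromCols (Ap lam mu ν) (App mu ν)
  have hA : Anu lam mu ν = fromBlocks 0 B Bᵀ 0 := by rw [Anu, transpose_fromCols]
  have hBt : LinearMap.ker Bᵀ.mulVecLin = ⊥ :=
    ker_mulVecLin_transpose_fromCols_Ap_App hmu hlm hν
  have hrankB : B.rank = 3 := by
    have hBt_nullity := rank_add_finrank_ker_mulVecLin Bᵀ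
    rwa [hBt, finrank_bot, add_zero, rank_transpose, Fintype.card_fin] at hBt_nullity
  have hker : Module.finrank ℝ (LinearMap.ker (Anu lam mu ν).mulVecLin) = 3 := by
    rw [hA, finrank_ker_mulVecLin_fromBlocks_zero_zero _ _ hBt]
    have hB_nullity := rank_add_finrank_ker_mulVecLin B
    simp only [hrankB, Fintype.card_sum, Fintype.card_fin] at hB_nullity
    omega
  refine ⟨?_, hker⟩
  have hA_nullity := rank_add_finrank_ker_mulVecLin (Anu lam mu ν)
  simp only [hker, Fintype.card_sum, Fintype.card_fin] at hA_nullity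
  omega
end

section
/- Let A' and A'' be real 3×3 matrices with A' invertible, let A be the real 9×9 matrix given in 3×3-block form by A := [[0, A', A''], [A'ᵀ, 0, 0], [A''ᵀ, 0, 0]], and let M be a symmetric real 9×9 matrix such that Ker A ⊆ Ker M. Then the 3×3 blocks of M satisfy M₂' = M₂ (A')⁻¹ A'', M₃' = M₃ (A')⁻¹ A'', and M₃'' = (M₃')ᵀ (A')⁻¹ A''. -/
/-!
For every `w`, the vector `(0, -A'⁻¹ A'' w, w)` lies in `Ker A`, hence in `Ker M`. So the last
block column of `M` equals its middle block column times `A'⁻¹ A''`; reading this off on the three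
block rows gives the three identities, the last one after identifying `M[7..9,4..6]` with `(M₃')ᵀ`
by symmetry.
-/

open Matrix

/-- The `9 × 9` matrix `A` in `3 × 3` block form `[[0, A', A''], [A'ᵀ, 0, 0], [A''ᵀ, 0, 0]]`. -/
def blockA (A' A'' : Matrix (Fin 3) (Fin 3) ℝ) : Matrix I9 I9 ℝ :=
  Matrix.fromBlocks 0 (Matrix.fromCols A' A'') (Matrix.fromRows A'ᵀ A''ᵀ) 0

/-- The block `M₁ = M[1..3,1..3]` of a `9 × 9` matrix. -/
def blk₁ (M : Matrix I9 I9 ℝ) : Matrix (Fin 3) (Fin 3) ℝ := M.submatrix Sum.inl Sum.inl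

/-- The block `M₂ = M[1..3,4..6]`. -/
def blk₂ (M : Matrix I9 I9 ℝ) : Matrix (Fin 3) (Fin 3) ℝ :=
  M.submatrix Sum.inl (Sum.inr ∘ Sum.inl)

/-- The block `M₂' = M[1..3,7..9]`. -/
def blk₂' (M : Matrix I9 I9 ℝ) : Matrix (Fin 3) (Fin 3) ℝ :=
  M.submatrix Sum.inl (Sum.inr ∘ Sum.inr)

/-- The block `M₃ = M[4..6,4..6]`. -/
def blk₃ (M : Matrix I9 I9 ℝ) : Matrix (Fin 3) (Fin 3) ℝ :=
  M.submatrix (Sum.inr ∘ Sum.inl) (Sum.inr ∘ Sum.inl)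

/-- The block `M₃' = M[4..6,7..9]`. -/
def blk₃' (M : Matrix I9 I9 ℝ) : Matrix (Fin 3) (Fin 3) ℝ :=
  M.submatrix (Sum.inr ∘ Sum.inl) (Sum.inr ∘ Sum.inr)

/-- The block `M₃'' = M[7..9,7..9]`. -/
def blk₃'' (M : Matrix I9 I9 ℝ) : Matrix (Fin 3) (Fin 3) ℝ :=
  M.submatrix (Sum.inr ∘ Sum.inr) (Sum.inr ∘ Sum.inr)

namespace Matrix

variable {l m n p R : Type*} [Fintype n]

theorem mul_eq_zero_of_mulVec_eq_zero_imp [Semiring R] {A : Matrix l n R} {M : Matrix m n R}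
    {K : Matrix n p R} (hker : ∀ x, A *ᵥ x = 0 → M *ᵥ x = 0) (hK : A * K = 0) : M * K = 0 := by
  ext i j
  have hcol : A *ᵥ (fun k => K k j) = 0 := funext fun i => congrFun (congrFun hK i) j
  exact congrFun (hker _ hcol) i

theorem fromCols_mul_fromRows_neg_inv_mul_one [Fintype p] [DecidableEq n] [DecidableEq p]
    [CommRing R] {A' : Matrix n n R} (hA' : IsUnit A'.det) (A'' : Matrix n p R) :
    fromCols A' A'' * fromRows (-(A'⁻¹ * A'')) (1 : Matrix p p R) = 0 := by
  rw [fromCols_mul_fromRows, Matrix.mul_neg, ← Matrix.mul_assoc, mul_nonsing_inv A' hA',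
    Matrix.one_mul, Matrix.mul_one, neg_add_cancel]

theorem submatrix_inr_inr_eq_mul_of_mul_fromRows_eq_zero [Fintype l] [Fintype p] [DecidableEq p]
    [Ring R] {M : Matrix m (l ⊕ n ⊕ p) R} {N : Matrix n p R}
    (h : M * fromRows (0 : Matrix l p R) (fromRows (-N) (1 : Matrix p p R)) = 0) {k : Type*}
    (r : k → m) :
    M.submatrix r (Sum.inr ∘ Sum.inr) = M.submatrix r (Sum.inr ∘ Sum.inl) * N := by
  ext i j
  refine (neg_add_eq_zero.mp ?_).symm
  simpa [mul_apply, Fintype.sum_sum_type, one_apply] using congrFun (congrFun h (r i)) j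

end Matrix

theorem blockA_mul_fromRows_eq_zero {A' : Matrix (Fin 3) (Fin 3) ℝ} (hA' : IsUnit A'.det)
    (A'' : Matrix (Fin 3) (Fin 3) ℝ) :
    blockA A' A'' *
      fromRows (0 : Matrix (Fin 3) (Fin 3) ℝ) (fromRows (-(A'⁻¹ * A'')) (1 : Matrix (Fin 3) (Fin 3) ℝ))
      = 0 := by
  rw [blockA, fromBlocks_mul_fromRows, fromCols_mul_fromRows_neg_inv_mul_one hA']
  simp

theorem stmt6 (A' A'' : Matrix (Fin 3) (Fin 3) ℝ) (hA' : IsUnit A'.det)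
    (M : Matrix I9 I9 ℝ) (hM : M.IsSymm)
    (hker : ∀ x : I9 → ℝ, (blockA A' A'').mulVec x = 0 → M.mulVec x = 0) :
    blk₂' M = blk₂ M * A'⁻¹ * A'' ∧ blk₃' M = blk₃ M * A'⁻¹ * A'' ∧
      blk₃'' M = (blk₃' M)ᵀ * A'⁻¹ * A'' := by
  have hcol := submatrix_inr_inr_eq_mul_of_mul_fromRows_eq_zero (k := Fin 3)
    (mul_eq_zero_of_mulVec_eq_zero_imp hker (blockA_mul_fromRows_eq_zero hA' A''))
  have hsymm : (blk₃' M)ᵀ = M.submatrix (Sum.inr ∘ Sum.inr) (Sum.inr ∘ Sum.inl) := by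
    rw [blk₃', transpose_submatrix, hM.eq]
  simp only [mul_assoc, hsymm]
  exact ⟨hcol Sum.inl, hcol (Sum.inr ∘ Sum.inl), hcol (Sum.inr ∘ Sum.inr)⟩
end

section
/- Let ν ∈ ℝ³ with |ν| = 1 and ν_i ≠ 0 for i = 1, 2, 3, and let M be an admissible boundary matrix for A_ν. Then the blocks M₁ and M₃ of M are positive definite, and rank(A_ν + M) = rank(A_ν − M) = 3. -/
open Matrix

/-- `M` is an admissible boundary matrix for `A`: `M` is symmetric positive semidefinite,
`Ker A ⊆ Ker M`, and `Ker (A - M) + Ker (A + M) = ℝ⁹`. -/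
def IsAdmissible (A M : Matrix I9 I9 ℝ) : Prop :=
  M.IsSymm ∧ M.PosSemidef ∧ (∀ x : I9 → ℝ, A.mulVec x = 0 → M.mulVec x = 0) ∧
    LinearMap.ker (A - M).mulVecLin ⊔ LinearMap.ker (A + M).mulVecLin = ⊤

/-!
Write `A_ν = [[0, B], [Bᵀ, 0]]` with `B = [A'_ν A''_ν]`. Since `det A'_ν ≠ 0`, `B` has rank 3, so
`Ker A_ν` is 3-dimensional and the quadratic form of `A_ν` vanishes on the 6-dimensional subspace
`L = {x₁ = 0}`. On `Ker (A_ν ∓ M)` the quadratic forms of `A_ν` and `±M` agree, so positive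
semidefiniteness of `M` gives `Ker (A_ν ∓ M) ∩ L ⊆ Ker A_ν`, hence `dim Ker (A_ν ∓ M) ≤ 9 - 6 + 3`.
As `Ker A_ν ⊆ Ker M` lies in both kernels and they span `ℝ⁹`, their dimensions add up to `9 + 3`;
so both are 6 and both ranks are 3.

Admissibility also forces `Ker M ⊆ Ker A_ν`: if `M (u + w) = 0` with `A_ν u = M u` and
`A_ν w = -M w`, then `A_ν (u + w) = 2 M u`, and by symmetry of `A_ν` and `M`,
`2 u · M u = u · A_ν (u + w) = u · M (u + w) = 0`. No nonzero vector supported on the first or on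
the second block lies in `Ker A_ν`, so the blocks `M₁` and `M₃` are positive definite.
-/

open Module LinearMap

lemma Submodule.finrank_add_finrank_le_of_inf_le {K V : Type*} [DivisionRing K] [AddCommGroup V]
    [Module K V] [FiniteDimensional K V] {U L W : Submodule K V} (h : U ⊓ L ≤ W) :
    finrank K U + finrank K L ≤ finrank K V + finrank K W := by
  have := Submodule.finrank_sup_add_finrank_inf_eq U L
  have := Submodule.finrank_le (U ⊔ L)
  have := Submodule.finrank_mono h
  omega

lemma Matrix.rank_add_finrank_ker {K m n : Type*} [Field K] [Fintype m] [Fintype n]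
    (A : Matrix m n K) : A.rank + finrank K (ker A.mulVecLin) = Fintype.card n := by
  rw [rank, finrank_range_add_finrank_ker, finrank_fintype_fun_eq_card]

section Admissible

variable {n : Type*} [Fintype n] {A M : Matrix n n ℝ}

lemma Matrix.IsSymm.dotProduct_mulVec_comm (hA : A.IsSymm) (u x : n → ℝ) :
    u ⬝ᵥ (A *ᵥ x) = (A *ᵥ u) ⬝ᵥ x := by
  rw [dotProduct_mulVec, ← mulVec_transpose, hA]

lemma Matrix.PosSemidef.mulVec_eq_zero_of_dotProduct_eq_zero (hM : M.PosSemidef) {x : n → ℝ}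
    (hx : x ⬝ᵥ (M *ᵥ x) = 0) : M *ᵥ x = 0 :=
  (hM.dotProduct_mulVec_zero_iff x).1 (by simpa using hx)

lemma ker_mulVecLin_le_of_sup_eq_top (hA : A.IsSymm) (hM : M.PosSemidef)
    (hsup : ker (A - M).mulVecLin ⊔ ker (A + M).mulVecLin = ⊤) :
    ker M.mulVecLin ≤ ker A.mulVecLin := by
  intro x hx
  obtain ⟨u, hu, w, hw, rfl⟩ := Submodule.mem_sup.1 (hsup ▸ Submodule.mem_top : x ∈ _)
  simp only [mem_ker, mulVecLin_apply, sub_mulVec, add_mulVec, sub_eq_zero,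
    add_eq_zero_iff_eq_neg] at hu hw hx ⊢
  have hMsymm : M.IsSymm := isHermitian_iff_isSymm.1 hM.isHermitian
  have hAx : A *ᵥ (u + w) = (2 : ℝ) • (M *ᵥ u) := by
    rw [mulVec_add, hu, hw, eq_neg_of_add_eq_zero_right ((mulVec_add M u w).symm.trans hx),
      neg_neg, two_smul]
  have hMu : u ⬝ᵥ (M *ᵥ u) = 0 := by
    have h := hA.dotProduct_mulVec_comm u (u + w)
    rw [hu, ← hMsymm.dotProduct_mulVec_comm, hx, dotProduct_zero, hAx, dotProduct_smul,
      smul_eq_mul] at h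
    simpa using h
  rw [hAx, hM.mulVec_eq_zero_of_dotProduct_eq_zero hMu, smul_zero]

lemma ker_sub_smul_inf_le (hM : M.PosSemidef) (c : ℝ) {L : Submodule ℝ (n → ℝ)}
    (hL : ∀ x ∈ L, x ⬝ᵥ (A *ᵥ x) = 0) :
    ker (A - c • M).mulVecLin ⊓ L ≤ ker A.mulVecLin := by
  rintro x ⟨hx, hxL⟩
  simp only [SetLike.mem_coe, mem_ker, mulVecLin_apply, sub_mulVec, smul_mulVec, sub_eq_zero]
    at hx ⊢
  have hq : c * (x ⬝ᵥ (M *ᵥ x)) = 0 := by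
    rw [← smul_eq_mul, ← dotProduct_smul, ← hx]
    exact hL x hxL
  rcases mul_eq_zero.1 hq with rfl | hq
  · simpa using hx
  · rw [hx, hM.mulVec_eq_zero_of_dotProduct_eq_zero hq, smul_zero]

theorem rank_sub_and_rank_add_of_isotropic (hM : M.PosSemidef)
    (hker : ker A.mulVecLin ≤ ker M.mulVecLin)
    (hsup : ker (A - M).mulVecLin ⊔ ker (A + M).mulVecLin = ⊤)
    {L : Submodule ℝ (n → ℝ)} (hL : ∀ x ∈ L, x ⬝ᵥ (A *ᵥ x) = 0)
    (hdim : 2 * finrank ℝ L = Fintype.card n + finrank ℝ (ker A.mulVecLin)) :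
    (A - M).rank + finrank ℝ (ker A.mulVecLin) = finrank ℝ L ∧
      (A + M).rank + finrank ℝ (ker A.mulVecLin) = finrank ℝ L := by
  have hU := Submodule.finrank_add_finrank_le_of_inf_le (ker_sub_smul_inf_le hM 1 hL)
  have hV := Submodule.finrank_add_finrank_le_of_inf_le (ker_sub_smul_inf_le hM (-1) hL)
  rw [one_smul] at hU
  rw [neg_one_smul, sub_neg_eq_add] at hV
  have hinf : ker A.mulVecLin ≤ ker (A - M).mulVecLin ⊓ ker (A + M).mulVecLin := fun x hx ↦ by
    have hMx : M *ᵥ x = 0 := hker hx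
    simp only [mem_ker, mulVecLin_apply] at hx
    simp [Submodule.mem_inf, hx, hMx]
  have hsum := Submodule.finrank_sup_add_finrank_inf_eq (ker (A - M).mulVecLin)
    (ker (A + M).mulVecLin)
  rw [hsup, finrank_top] at hsum
  have := Submodule.finrank_mono hinf
  have := (A - M).rank_add_finrank_ker
  have := (A + M).rank_add_finrank_ker
  rw [finrank_fintype_fun_eq_card] at hU hV hsum
  omega

end Admissible

section Submatrix

variable {m n : Type*} [Fintype m] [Fintype n]

lemma dotProduct_submatrix_mulVec_comp {R : Type*} [CommSemiring R] (M : Matrix n n R)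
    {e : m → n} (he : Function.Injective e) {x : n → R} (hx : ∀ i ∉ Set.range e, x i = 0) :
    (x ∘ e) ⬝ᵥ (M.submatrix e e *ᵥ (x ∘ e)) = x ⬝ᵥ (M *ᵥ x) := by
  have hsum (f : n → R) (hf : ∀ i ∉ Set.range e, f i = 0) : ∑ a, f (e a) = ∑ i, f i :=
    Fintype.sum_of_injective e he _ _ hf fun _ ↦ rfl
  simp only [dotProduct, mulVec, Function.comp_apply, submatrix_apply]
  rw [← hsum (fun i ↦ x i * ∑ j, M i j * x j) fun i hi ↦ by simp [hx i hi]]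
  refine Finset.sum_congr rfl fun a _ ↦ congrArg (x (e a) * ·) ?_
  exact hsum (fun j ↦ M (e a) j * x j) fun j hj ↦ by simp [hx j hj]

lemma Matrix.PosSemidef.posDef_submatrix {M : Matrix n n ℝ} (hM : M.PosSemidef) {e : m → n}
    (he : Function.Injective e)
    (h : ∀ x, M *ᵥ x = 0 → (∀ i ∉ Set.range e, x i = 0) → x = 0) :
    (M.submatrix e e).PosDef := by
  classical
  refine posDef_iff_dotProduct_mulVec.2 ⟨(hM.submatrix e).isHermitian, fun y hy ↦ ?_⟩
  set x := Function.extend e y 0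
  have hxe : x ∘ e = y := funext fun a ↦ he.extend_apply y 0 a
  have hx (i) (hi : i ∉ Set.range e) : x i = 0 := by
    simp [x, Function.extend_apply' _ _ _ fun ⟨a, ha⟩ ↦ hi ⟨a, ha⟩]
  rw [star_trivial, ← hxe, dotProduct_submatrix_mulVec_comp M he hx]
  refine (hM.dotProduct_mulVec_nonneg x).lt_of_ne' fun h0 ↦ hy ?_
  rw [← hxe, h x (hM.mulVec_eq_zero_of_dotProduct_eq_zero (by simpa using h0)) hx]
  rfl

end Submatrix

section Block

variable {m p : Type*} [Fintype m] [Fintype p]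

lemma fromBlocks_zero_mulVec {R : Type*} [NonUnitalNonAssocSemiring R] (B : Matrix m p R)
    (C : Matrix p m R) (x : m ⊕ p → R) :
    fromBlocks 0 B C 0 *ᵥ x = Sum.elim (B *ᵥ (x ∘ Sum.inr)) (C *ᵥ (x ∘ Sum.inl)) := by
  simp [fromBlocks_mulVec]

lemma dotProduct_fromBlocks_zero_mulVec_self {R : Type*} [NonUnitalNonAssocSemiring R]
    (B : Matrix m p R) (C : Matrix p m R) {x : m ⊕ p → R} (hx : x ∘ Sum.inl = 0) :
    x ⬝ᵥ (fromBlocks 0 B C 0 *ᵥ x) = 0 := by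
  rw [fromBlocks_zero_mulVec, ← Sum.elim_comp_inl_inr x, sumElim_dotProduct_sumElim]
  simp [hx]

lemma finrank_ker_funLeft_inl (K : Type*) [Field K] :
    finrank K (ker (funLeft K K (Sum.inl : m → m ⊕ p))) = Fintype.card p := by
  have := finrank_range_add_finrank_ker (funLeft K K (Sum.inl : m → m ⊕ p))
  rw [range_eq_top.2 (funLeft_surjective_of_injective _ _ _ Sum.inl_injective), finrank_top,
    finrank_fintype_fun_eq_card, finrank_fintype_fun_eq_card, Fintype.card_sum] at this
  omega

lemma ker_mulVecLin_transpose_eq_bot {K : Type*} [Field K] {B : Matrix m p K}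
    (hB : B.rank = Fintype.card m) : ker Bᵀ.mulVecLin = ⊥ := by
  have := Bᵀ.rank_add_finrank_ker
  rw [rank_transpose, hB] at this
  exact Submodule.finrank_eq_zero.1 (by omega)

lemma finrank_ker_fromBlocks_zero {K : Type*} [Field K] (B : Matrix m p K) {C : Matrix p m K}
    (hC : ker C.mulVecLin = ⊥) :
    finrank K (ker (fromBlocks 0 B C 0).mulVecLin) = finrank K (ker B.mulVecLin) := by
  let e := LinearEquiv.sumPiEquivProdPi K m p fun _ ↦ K
  have : ker (fromBlocks 0 B C 0).mulVecLin =
      (ker (C.mulVecLin.prodMap B.mulVecLin)).comap (e : (m ⊕ p → K) →ₗ[K] _) := by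
    ext x
    simp [fromBlocks_zero_mulVec, e, and_comm, ← Sum.elim_zero_zero, Sum.elim_eq_iff,
      Function.comp_def]
  rw [this, Submodule.comap_equiv_eq_map_symm, LinearEquiv.finrank_map_eq, ker_prodMap, hC,
    ← Submodule.map_inr]
  exact (Submodule.equivMapOfInjective _ inr_injective _).finrank_eq.symm

theorem rank_fromBlocks_zero_sub_and_add_eq {B : Matrix m p ℝ} (hB : B.rank = Fintype.card m)
    {M : Matrix (m ⊕ p) (m ⊕ p) ℝ} (hM : M.PosSemidef)
    (hker : ker (fromBlocks 0 B Bᵀ 0).mulVecLin ≤ ker M.mulVecLin)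
    (hsup : ker (fromBlocks 0 B Bᵀ 0 - M).mulVecLin ⊔
      ker (fromBlocks 0 B Bᵀ 0 + M).mulVecLin = ⊤) :
    (fromBlocks 0 B Bᵀ 0 - M).rank = Fintype.card m ∧
      (fromBlocks 0 B Bᵀ 0 + M).rank = Fintype.card m := by
  have hK := finrank_ker_fromBlocks_zero B (ker_mulVecLin_transpose_eq_bot hB)
  have hBker := B.rank_add_finrank_ker
  have hBle := B.rank_le_card_width
  have hL := finrank_ker_funLeft_inl (m := m) (p := p) ℝ
  obtain ⟨hsub, hadd⟩ := rank_sub_and_rank_add_of_isotropic hM hker hsup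
    (fun x hx ↦ dotProduct_fromBlocks_zero_mulVec_self B Bᵀ hx)
    (by rw [hL, hK, Fintype.card_sum]; omega)
  rw [hL, hK] at hsub hadd
  omega

lemma posDef_submatrix_inl_of_ker_le {B : Matrix m p ℝ} (hB : B.rank = Fintype.card m)
    {M : Matrix (m ⊕ p) (m ⊕ p) ℝ} (hM : M.PosSemidef)
    (hker : ker M.mulVecLin ≤ ker (fromBlocks 0 B Bᵀ 0).mulVecLin) :
    (M.submatrix Sum.inl Sum.inl).PosDef := by
  refine hM.posDef_submatrix Sum.inl_injective fun x hMx hx ↦ ?_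
  have hAx : fromBlocks 0 B Bᵀ 0 *ᵥ x = 0 := hker hMx
  rw [fromBlocks_zero_mulVec, ← Sum.elim_zero_zero, Sum.elim_eq_iff] at hAx
  have hl : x ∘ Sum.inl = 0 := (ker_eq_bot'.1 (ker_mulVecLin_transpose_eq_bot hB)) _ hAx.2
  have hr : x ∘ Sum.inr = 0 := funext fun j ↦ hx _ (by simp)
  rw [← Sum.elim_comp_inl_inr x, hl, hr, Sum.elim_zero_zero]

lemma rank_fromCols_of_det_ne_zero [DecidableEq m] {P : Matrix m m ℝ} (hP : P.det ≠ 0)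
    (Q : Matrix m p ℝ) : (fromCols P Q).rank = Fintype.card m :=
  le_antisymm (fromCols P Q).rank_le_card_height <| by
    have hsub : (fromCols P Q).submatrix _root_.id Sum.inl = P := rfl
    simpa [hsub, rank_of_det_ne_zero hP] using (fromCols P Q).rank_submatrix_le _root_.id Sum.inl

lemma posDef_submatrix_inr_inl_of_ker_le [DecidableEq m] {P : Matrix m m ℝ} (hP : P.det ≠ 0)
    (Q : Matrix m p ℝ) {M : Matrix (m ⊕ (m ⊕ p)) (m ⊕ (m ⊕ p)) ℝ} (hM : M.PosSemidef)
    (hker : ker M.mulVecLin ≤ ker (fromBlocks 0 (fromCols P Q) (fromCols P Q)ᵀ 0).mulVecLin) :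
    (M.submatrix (Sum.inr ∘ Sum.inl) (Sum.inr ∘ Sum.inl)).PosDef := by
  refine hM.posDef_submatrix (Sum.inr_injective.comp Sum.inl_injective) fun x hMx hx ↦ ?_
  have hAx : fromBlocks 0 (fromCols P Q) (fromCols P Q)ᵀ 0 *ᵥ x = 0 := hker hMx
  rw [fromBlocks_zero_mulVec, ← Sum.elim_zero_zero, Sum.elim_eq_iff, fromCols_mulVec] at hAx
  have hQ : (x ∘ Sum.inr) ∘ Sum.inr = 0 := funext fun k ↦ hx _ (by simp)
  have hPx : P *ᵥ ((x ∘ Sum.inr) ∘ Sum.inl) = 0 := by simpa [hQ] using hAx.1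
  have hmid := mulVec_injective_of_det_ne_zero hP (hPx.trans (mulVec_zero P).symm)
  funext i
  rcases i with i | i | i
  · exact hx _ (by simp)
  · exact congrFun hmid i
  · exact congrFun hQ i

end Block

-- `A'_ν = -diag ν * ((α - β) I + β J)` with `α - β = √(2μ)` and `α + 2β = √(2μ + 3λ)`.
lemma det_Ap (lam mu : ℝ) (ν : Fin 3 → ℝ) :
    (Ap lam mu ν).det =
      -(ν 0 * ν 1 * ν 2) * Real.sqrt (2 * mu) ^ 2 * Real.sqrt (2 * mu + 3 * lam) := by
  simp only [Ap, alph, bet, det_fin_three, neg_of, neg_cons, neg_empty, of_apply, cons_val',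
    cons_val_zero, cons_val_one, cons_val, cons_val_fin_one]
  ring

lemma det_Ap_ne_zero {lam mu : ℝ} (hmu : 0 < mu) (hlm : 0 < 2 * mu + 3 * lam) {ν : Fin 3 → ℝ}
    (hν0 : ∀ i : Fin 3, ν i ≠ 0) : (Ap lam mu ν).det ≠ 0 := by
  simp [det_Ap, hν0, Real.sqrt_ne_zero'.2 hmu, Real.sqrt_ne_zero'.2 hlm]

lemma Anu_eq_fromBlocks (lam mu : ℝ) (ν : Fin 3 → ℝ) :
    Anu lam mu ν = fromBlocks 0 (fromCols (Ap lam mu ν) (App mu ν))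
      (fromCols (Ap lam mu ν) (App mu ν))ᵀ 0 := by
  rw [Anu, transpose_fromCols]

theorem stmt7_general (lam mu : ℝ) (hmu : 0 < mu) (hlm : 0 < 2 * mu + 3 * lam) (ν : Fin 3 → ℝ)
    (hν0 : ∀ i : Fin 3, ν i ≠ 0)
    (M : Matrix I9 I9 ℝ) (hM : IsAdmissible (Anu lam mu ν) M) :
    (blk₁ M).PosDef ∧ (blk₃ M).PosDef ∧
      (Anu lam mu ν + M).rank = 3 ∧ (Anu lam mu ν - M).rank = 3 := by
  obtain ⟨-, hMpsd, hAM, hsup⟩ := hM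
  have hdet := det_Ap_ne_zero hmu hlm hν0
  have hB := rank_fromCols_of_det_ne_zero hdet (App mu ν)
  rw [Anu_eq_fromBlocks] at hAM hsup ⊢
  have hMA := ker_mulVecLin_le_of_sup_eq_top (isSymm_zero.fromBlocks rfl isSymm_zero) hMpsd hsup
  obtain ⟨hsub, hadd⟩ := rank_fromBlocks_zero_sub_and_add_eq hB hMpsd hAM hsup
  exact ⟨posDef_submatrix_inl_of_ker_le hB hMpsd hMA,
    posDef_submatrix_inr_inl_of_ker_le hdet _ hMpsd hMA, hadd, hsub⟩

theorem stmt7 (lam mu : ℝ) (hmu : 0 < mu) (hlm : 0 < 2 * mu + 3 * lam) (ν : Fin 3 → ℝ)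
    (hν : ν 0 ^ 2 + ν 1 ^ 2 + ν 2 ^ 2 = 1)
    (hν0 : ∀ i : Fin 3, ν i ≠ 0)
    (M : Matrix I9 I9 ℝ) (hM : IsAdmissible (Anu lam mu ν) M) :
    (blk₁ M).PosDef ∧ (blk₃ M).PosDef ∧
      (Anu lam mu ν + M).rank = 3 ∧ (Anu lam mu ν - M).rank = 3 :=
  stmt7_general lam mu hmu hlm ν hν0 M hM
end

section
/- Let ν ∈ ℝ³ with |ν| = 1 and ν_i ≠ 0 for i = 1, 2, 3, and let M be an admissible boundary matrix for A_ν. Then for every v ∈ ℝ³ and every symmetric real 3×3 matrix σ, with U(v,σ) := (v, C̃^{−1/2} σ'_pr, μ^{−1/2} σ''_pr) ∈ ℝ⁹, one has: (A_ν + M) · U(v,σ) = 0 if and only if A'_ν M₃⁻¹ (A'_ν + M₂)ᵀ v − σν = 0, and (A_ν − M) · U(v,σ) = 0 if and only if A'_ν M₃⁻¹ (A'_ν − M₂)ᵀ v + σν = 0 (σν denoting the matrix-vector product). -/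
open Matrix

/-- The matrix `C̃^γ`, with diagonal entries `α_γ` and off-diagonal entries `β_γ`. -/
noncomputable def Cpow (lam mu γ : ℝ) : Matrix (Fin 3) (Fin 3) ℝ :=
  Matrix.of fun i j =>
    if i = j then (2 * (2 * mu) ^ γ + (2 * mu + 3 * lam) ^ γ) / 3
    else (- (2 * mu) ^ γ + (2 * mu + 3 * lam) ^ γ) / 3

/-- The vector `U(v,σ) = (v, C̃^{-1/2} σ'_pr, μ^{-1/2} σ''_pr) ∈ ℝ⁹`. -/
noncomputable def Uvec (lam mu : ℝ) (v : Fin 3 → ℝ) (σ : Matrix (Fin 3) (Fin 3) ℝ) : I9 → ℝ :=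
  Sum.elim v
    (Sum.elim ((Cpow lam mu (-(1/2))).mulVec ![σ 0 0, σ 1 1, σ 2 2])
      (fun i => mu ^ (-(1/2) : ℝ) * ![σ 0 1, σ 0 2, σ 1 2] i))

/-!
Write `A_ν = [[0, B], [Bᵀ, 0]]` with `B = [A'_ν | A''_ν]`. Since `A'_ν = -diag(ν) C̃^{1/2}` is
invertible, `A''_ν = A'_ν K`, and `A_ν = Pᵀ C P` for `C = [[0, A'_ν], [A'_νᵀ, 0]]` and the
surjection `P (v, p, q) = (v, p + K q)`. As `Ker P ⊆ Ker A_ν ⊆ Ker M` and `M` is symmetric, also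
`M = Pᵀ N P` with `N` the upper left `6 × 6` block of `M`, and the problem descends to `C ± N`.

There, a null vector `x` of `N` has `C x ⊥ Ker (C - N) + Ker (C + N) = ℝ⁶`, so `C x = 0` and
`x = 0`. If `M₃ z = 0`, positivity of `N` makes `(0, z)` a null vector, so `M₃` is invertible.
The second block row of `(C ± N) (v, u) = 0` then reads `u = ∓M₃⁻¹ (A'_ν ± M₂)ᵀ v`, and the first
one says that `v` lies in the kernel of a Schur complement `S±`. So `Ker (C ± N)` lies in the image
of `Ker S±` under `v ↦ (v, ∓M₃⁻¹ (A'_ν ± M₂)ᵀ v)`; as these two images span `ℝ⁶`, both `S±`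
vanish. Finally, `A'_ν C̃^{-1/2} σ'_pr + A''_ν μ^{-1/2} σ''_pr = -σν`.
-/

section Dilation

variable {m n : Type*}

def symmetricDilation (B : Matrix m n ℝ) : Matrix (m ⊕ n) (m ⊕ n) ℝ := fromBlocks 0 B Bᵀ 0

lemma symmetricDilation_neg (B : Matrix m n ℝ) :
    symmetricDilation (-B) = -symmetricDilation B := by
  simp [symmetricDilation, fromBlocks_neg]

lemma symmetricDilation_isSymm (B : Matrix m n ℝ) : (symmetricDilation B).IsSymm := by
  simp [symmetricDilation, IsSymm, fromBlocks_transpose]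

variable [Fintype m] [Fintype n]

lemma symmetricDilation_add_mulVec (B : Matrix m n ℝ) {N : Matrix (m ⊕ n) (m ⊕ n) ℝ}
    (hN : N.IsSymm) (v : m → ℝ) (u : n → ℝ) :
    (symmetricDilation B + N) *ᵥ Sum.elim v u =
      Sum.elim (N.toBlocks₁₁ *ᵥ v + (B + N.toBlocks₁₂) *ᵥ u)
        ((B + N.toBlocks₁₂)ᵀ *ᵥ v + N.toBlocks₂₂ *ᵥ u) := by
  have h₂₁ : N.toBlocks₂₁ = N.toBlocks₁₂ᵀ := by
    ext i j; exact hN.apply (Sum.inl j) (Sum.inr i)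
  rw [← fromBlocks_toBlocks N, symmetricDilation, fromBlocks_add, fromBlocks_mulVec]
  simp only [toBlocks_fromBlocks₁₁, toBlocks_fromBlocks₁₂, toBlocks_fromBlocks₂₂, h₂₁, zero_add,
    add_mulVec, transpose_add, Sum.elim_comp_inl, Sum.elim_comp_inr, add_assoc]

lemma ker_symmetricDilation_neg_add (B : Matrix m n ℝ) (N : Matrix (m ⊕ n) (m ⊕ n) ℝ) :
    LinearMap.ker (symmetricDilation (-B) + N).mulVecLin =
      LinearMap.ker (symmetricDilation B - N).mulVecLin := by
  ext x
  simp only [LinearMap.mem_ker, mulVecLin_apply, symmetricDilation_neg, neg_add_eq_sub,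
    ← neg_sub (symmetricDilation B), neg_mulVec, neg_eq_zero]

lemma ker_symmetricDilation_neg_sub (B : Matrix m n ℝ) (N : Matrix (m ⊕ n) (m ⊕ n) ℝ) :
    LinearMap.ker (symmetricDilation (-B) - N).mulVecLin =
      LinearMap.ker (symmetricDilation B + N).mulVecLin := by
  ext x
  simp only [LinearMap.mem_ker, mulVecLin_apply, symmetricDilation_neg, ← neg_add',
    neg_mulVec, neg_eq_zero]

lemma Matrix.IsSymm.dotProduct_mulVec_comm_s10 {X : Matrix n n ℝ} (hX : X.IsSymm) (x y : n → ℝ) :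
    (X *ᵥ x) ⬝ᵥ y = x ⬝ᵥ (X *ᵥ y) := by
  rw [dotProduct_mulVec, ← mulVec_transpose, hX.eq]

lemma mulVec_eq_zero_of_ker_sup_eq_top {C N : Matrix n n ℝ} (hC : C.IsSymm) (hN : N.IsSymm)
    (hsup : LinearMap.ker (C - N).mulVecLin ⊔ LinearMap.ker (C + N).mulVecLin = ⊤)
    {x : n → ℝ} (hx : N *ᵥ x = 0) : C *ᵥ x = 0 := by
  obtain ⟨y₁, hy₁, y₂, hy₂, hy⟩ := Submodule.mem_sup.1 (hsup ▸ Submodule.mem_top (x := C *ᵥ x))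
  simp only [LinearMap.mem_ker, mulVecLin_apply, sub_mulVec, add_mulVec] at hy₁ hy₂
  have h₁ : (C *ᵥ x) ⬝ᵥ y₁ = 0 := by
    rw [hC.dotProduct_mulVec_comm_s10, sub_eq_zero.1 hy₁, ← hN.dotProduct_mulVec_comm_s10, hx,
      zero_dotProduct]
  have h₂ : (C *ᵥ x) ⬝ᵥ y₂ = 0 := by
    rw [hC.dotProduct_mulVec_comm_s10, eq_neg_of_add_eq_zero_left hy₂, dotProduct_neg,
      ← hN.dotProduct_mulVec_comm_s10, hx, zero_dotProduct, neg_zero]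
  rw [← dotProduct_self_eq_zero]
  nth_rw 2 [← hy]
  rw [dotProduct_add, h₁, h₂, add_zero]

end Dilation

lemma Submodule.eq_top_of_map_sup_map_eq_top {K V E E' : Type*} [Field K] [AddCommGroup V]
    [Module K V] [AddCommGroup E] [Module K E] [AddCommGroup E'] [Module K E']
    [FiniteDimensional K E] [FiniteDimensional K E'] {f : E →ₗ[K] V} {g : E' →ₗ[K] V}
    {S : Submodule K E} {T : Submodule K E'}
    (hdim : Module.finrank K V = Module.finrank K E + Module.finrank K E')
    (h : S.map f ⊔ T.map g = ⊤) : S = ⊤ := by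
  have hsup := Submodule.finrank_add_le_finrank_add_finrank (S.map f) (T.map g)
  rw [h, finrank_top] at hsup
  have := Submodule.finrank_map_le f S
  have := Submodule.finrank_map_le g T
  have := Submodule.finrank_le T
  exact Submodule.eq_top_of_finrank_eq (le_antisymm (Submodule.finrank_le S) (by omega))

section SquareDilation

variable {m : Type*} [Fintype m] [DecidableEq m] (B : Matrix m m ℝ)
  {N : Matrix (m ⊕ m) (m ⊕ m) ℝ}

lemma symmetricDilation_add_mulVec_eq_zero_iff_schurComplement (hN : N.IsSymm)
    (h₂₂ : IsUnit N.toBlocks₂₂.det) (v u : m → ℝ) :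
    (symmetricDilation B + N) *ᵥ Sum.elim v u = 0 ↔
      u = -(N.toBlocks₂₂⁻¹ * (B + N.toBlocks₁₂)ᵀ) *ᵥ v ∧
        (N.toBlocks₁₁ - (B + N.toBlocks₁₂) * N.toBlocks₂₂⁻¹ * (B + N.toBlocks₁₂)ᵀ) *ᵥ v = 0 := by
  set X := B + N.toBlocks₁₂
  set D := N.toBlocks₂₂
  have hsolve : Xᵀ *ᵥ v + D *ᵥ u = 0 ↔ u = -(D⁻¹ * Xᵀ) *ᵥ v := by
    constructor
    · intro h
      rw [neg_mulVec, ← mulVec_mulVec, ← mulVec_neg, ← eq_neg_of_add_eq_zero_right h,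
        mulVec_mulVec, nonsing_inv_mul _ h₂₂, one_mulVec]
    · rintro rfl
      rw [neg_mulVec, mulVec_neg, mulVec_mulVec, ← Matrix.mul_assoc, mul_nonsing_inv _ h₂₂,
        Matrix.one_mul, add_neg_cancel]
  rw [symmetricDilation_add_mulVec B hN, ← Sum.elim_zero_zero, Sum.elim_eq_iff, hsolve,
    and_comm]
  refine and_congr_right fun hu => ?_
  rw [hu, sub_mulVec, neg_mulVec, mulVec_neg, mulVec_mulVec, Matrix.mul_assoc, ← sub_eq_add_neg]

lemma ker_symmetricDilation_add_le (hN : N.IsSymm) (h₂₂ : IsUnit N.toBlocks₂₂.det) :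
    LinearMap.ker (symmetricDilation B + N).mulVecLin ≤
      (LinearMap.ker (N.toBlocks₁₁ - (B + N.toBlocks₁₂) * N.toBlocks₂₂⁻¹ *
        (B + N.toBlocks₁₂)ᵀ).mulVecLin).map
        (fromRows 1 (-(N.toBlocks₂₂⁻¹ * (B + N.toBlocks₁₂)ᵀ))).mulVecLin := by
  intro x hx
  rw [LinearMap.mem_ker, mulVecLin_apply, ← Sum.elim_comp_inl_inr x,
    symmetricDilation_add_mulVec_eq_zero_iff_schurComplement B hN h₂₂] at hx
  refine ⟨x ∘ Sum.inl, hx.2, ?_⟩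
  rw [mulVecLin_apply, fromRows_mulVec, one_mulVec, ← hx.1, Sum.elim_comp_inl_inr]

variable (hN : N.PosSemidef) (hB : IsUnit B.det)
  (hsup : LinearMap.ker (symmetricDilation B - N).mulVecLin ⊔
    LinearMap.ker (symmetricDilation B + N).mulVecLin = ⊤)
include hN hB hsup

lemma isUnit_det_toBlocks₂₂ : IsUnit N.toBlocks₂₂.det := by
  have hNs : N.IsSymm := isHermitian_iff_isSymm.1 hN.isHermitian
  rw [isUnit_iff_ne_zero]
  intro h0
  obtain ⟨z, hz0, hz⟩ := exists_mulVec_eq_zero_iff.2 h0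
  have hNz : N *ᵥ Sum.elim 0 z = Sum.elim (N.toBlocks₁₂ *ᵥ z) 0 := by
    rw [← fromBlocks_toBlocks N, fromBlocks_mulVec]
    simp [hz]
  have hker : N *ᵥ Sum.elim 0 z = 0 := by
    refine (hN.dotProduct_mulVec_zero_iff _).1 ?_
    rw [hNz, star_trivial, sumElim_dotProduct_sumElim, zero_dotProduct, dotProduct_zero,
      add_zero]
  have hC := mulVec_eq_zero_of_ker_sup_eq_top (symmetricDilation_isSymm B) hNs hsup hker
  rw [symmetricDilation, fromBlocks_mulVec] at hC
  simp only [zero_mulVec, mulVec_zero, zero_add, add_zero, Sum.elim_comp_inl, Sum.elim_comp_inr,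
    ← Sum.elim_zero_zero, Sum.elim_eq_iff] at hC
  exact hz0 ((mulVec_injective_iff_isUnit.2 ((isUnit_iff_isUnit_det B).2 hB)).eq_iff.1
    (hC.1.trans (mulVec_zero B).symm))

lemma ker_schurComplement_eq_top :
    LinearMap.ker (N.toBlocks₁₁ - (B + N.toBlocks₁₂) * N.toBlocks₂₂⁻¹ *
      (B + N.toBlocks₁₂)ᵀ).mulVecLin = ⊤ := by
  have hNs : N.IsSymm := isHermitian_iff_isSymm.1 hN.isHermitian
  have h₂₂ := isUnit_det_toBlocks₂₂ B hN hB hsup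
  have hcover := sup_le_sup (ker_symmetricDilation_add_le B hNs h₂₂)
    (ker_symmetricDilation_add_le (-B) hNs h₂₂)
  rw [ker_symmetricDilation_neg_add, sup_comm, hsup, top_le_iff] at hcover
  exact Submodule.eq_top_of_map_sup_map_eq_top (by simp [Module.finrank_fintype_fun_eq_card])
    hcover

theorem symmetricDilation_add_mulVec_eq_zero_iff (v u : m → ℝ) :
    (symmetricDilation B + N) *ᵥ Sum.elim v u = 0 ↔
      u = -(N.toBlocks₂₂⁻¹ * (B + N.toBlocks₁₂)ᵀ) *ᵥ v := by
  rw [symmetricDilation_add_mulVec_eq_zero_iff_schurComplement B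
    (isHermitian_iff_isSymm.1 hN.isHermitian) (isUnit_det_toBlocks₂₂ B hN hB hsup), and_iff_left]
  exact LinearMap.mem_ker.1 ((ker_schurComplement_eq_top B hN hB hsup).symm ▸ Submodule.mem_top)

theorem symmetricDilation_sub_mulVec_eq_zero_iff (v u : m → ℝ) :
    (symmetricDilation B - N) *ᵥ Sum.elim v u = 0 ↔
      u = (N.toBlocks₂₂⁻¹ * (B - N.toBlocks₁₂)ᵀ) *ᵥ v := by
  have hsup' : LinearMap.ker (symmetricDilation (-B) - N).mulVecLin ⊔
      LinearMap.ker (symmetricDilation (-B) + N).mulVecLin = ⊤ := by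
    rw [ker_symmetricDilation_neg_sub, ker_symmetricDilation_neg_add, sup_comm, hsup]
  have hB' : IsUnit (-B).det := by
    rw [det_neg]; exact (isUnit_one.neg.pow _).mul hB
  rw [← mulVecLin_apply, ← LinearMap.mem_ker, ← ker_symmetricDilation_neg_add, LinearMap.mem_ker,
    mulVecLin_apply, symmetricDilation_add_mulVec_eq_zero_iff (-B) hN hB' hsup', ← Matrix.mul_neg,
    ← transpose_neg, neg_add_eq_sub, neg_sub]

end SquareDilation

lemma transpose_one_submatrix_mul_mul {n k : Type*} [Fintype n] [DecidableEq n]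
    (X : Matrix n n ℝ) (f : k → n) :
    ((1 : Matrix n n ℝ).submatrix id f)ᵀ * X * (1 : Matrix n n ℝ).submatrix id f =
      X.submatrix f f := by
  ext i j
  simp [mul_apply, one_apply]

section Factorization

variable {n k : Type*} [Fintype n] [Fintype k] [DecidableEq k]

lemma eq_transpose_mul_submatrix_mul_of_ker_le [DecidableEq n] {X : Matrix n n ℝ}
    {P : Matrix k n ℝ} {f : k → n} (hX : X.IsSymm)
    (hP : P * (1 : Matrix n n ℝ).submatrix id f = 1) (hker : ∀ x, P *ᵥ x = 0 → X *ᵥ x = 0) :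
    X = Pᵀ * X.submatrix f f * P := by
  set E := (1 : Matrix n n ℝ).submatrix id f
  have hXEP : X * (E * P) = X := by
    refine mulVec_injective (funext fun x => ?_)
    have h := hker (x - (E * P) *ᵥ x) (by
      rw [mulVec_sub, mulVec_mulVec, ← Matrix.mul_assoc, hP, Matrix.one_mul, sub_self])
    rw [mulVec_sub, sub_eq_zero] at h
    rw [← mulVec_mulVec]
    exact h.symm
  have hPEX : X = Pᵀ * Eᵀ * X := by
    conv_lhs => rw [← hX, ← hXEP]
    rw [transpose_mul, transpose_mul, hX, Matrix.mul_assoc]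
  calc X = Pᵀ * Eᵀ * (X * (E * P)) := by rw [hXEP]; exact hPEX
    _ = Pᵀ * (Eᵀ * X * E) * P := by simp only [Matrix.mul_assoc]
    _ = Pᵀ * X.submatrix f f * P := by rw [transpose_one_submatrix_mul_mul]

lemma transpose_mul_mul_mulVec_eq_zero_iff {P : Matrix k n ℝ} {E : Matrix n k ℝ}
    (hPE : P * E = 1) (Y : Matrix k k ℝ) (x : n → ℝ) :
    (Pᵀ * Y * P) *ᵥ x = 0 ↔ Y *ᵥ (P *ᵥ x) = 0 := by
  rw [← mulVec_mulVec, ← mulVec_mulVec]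
  refine ⟨fun h => ?_, fun h => by rw [h, mulVec_zero]⟩
  calc Y *ᵥ P *ᵥ x = (P * E)ᵀ *ᵥ (Y *ᵥ P *ᵥ x) := by rw [hPE, transpose_one, one_mulVec]
    _ = Eᵀ *ᵥ (Pᵀ *ᵥ (Y *ᵥ P *ᵥ x)) := by rw [transpose_mul, ← mulVec_mulVec]
    _ = 0 := by rw [h, mulVec_zero]

lemma ker_sup_eq_top_of_transpose_mul_mul {P : Matrix k n ℝ} {E : Matrix n k ℝ}
    (hPE : P * E = 1) {Y Z : Matrix k k ℝ}
    (h : LinearMap.ker (Pᵀ * Y * P).mulVecLin ⊔ LinearMap.ker (Pᵀ * Z * P).mulVecLin = ⊤) :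
    LinearMap.ker Y.mulVecLin ⊔ LinearMap.ker Z.mulVecLin = ⊤ := by
  have hsurj : Function.Surjective P.mulVecLin := fun y =>
    ⟨E *ᵥ y, by rw [mulVecLin_apply, mulVec_mulVec, hPE, one_mulVec]⟩
  have hker : ∀ W : Matrix k k ℝ, LinearMap.ker (Pᵀ * W * P).mulVecLin =
      (LinearMap.ker W.mulVecLin).comap P.mulVecLin := fun W => by
    ext x
    simp only [LinearMap.mem_ker, Submodule.mem_comap, mulVecLin_apply,
      transpose_mul_mul_mulVec_eq_zero_iff hPE]
  rw [← Submodule.map_comap_eq_of_surjective hsurj (LinearMap.ker Y.mulVecLin),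
    ← Submodule.map_comap_eq_of_surjective hsurj (LinearMap.ker Z.mulVecLin),
    ← Submodule.map_sup, ← hker, ← hker, h, Submodule.map_top, LinearMap.range_eq_top.2 hsurj]

end Factorization

section Reduction

variable {m r : Type*} [Fintype m] [DecidableEq m]

def collapse (K : Matrix m r ℝ) : Matrix (m ⊕ m) (m ⊕ (m ⊕ r)) ℝ :=
  fromBlocks 1 0 0 (fromCols 1 K)

lemma symmetricDilation_fromCols_mul (B : Matrix m m ℝ) (K : Matrix m r ℝ) :
    symmetricDilation (fromCols B (B * K)) =
      (collapse K)ᵀ * symmetricDilation B * collapse K := by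
  simp [symmetricDilation, collapse, fromBlocks_transpose, fromBlocks_multiply, transpose_fromCols,
    mul_fromCols, fromRows_mul]

variable [Fintype r]

lemma collapse_mulVec (K : Matrix m r ℝ) (v p : m → ℝ) (q : r → ℝ) :
    collapse K *ᵥ Sum.elim v (Sum.elim p q) = Sum.elim v (p + K *ᵥ q) := by
  simp [collapse, fromBlocks_mulVec, fromCols_mulVec]

variable [DecidableEq r]

lemma collapse_mul_one_submatrix (K : Matrix m r ℝ) :
    collapse K * (1 : Matrix (m ⊕ (m ⊕ r)) (m ⊕ (m ⊕ r)) ℝ).submatrix id (Sum.map id Sum.inl) =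
      1 := by
  ext (i | i) (j | j) <;> simp [collapse, mul_apply, one_apply, Fintype.sum_sum_type]

theorem symmetricDilation_fromCols_mulVec_eq_zero_iff {B : Matrix m m ℝ} {B₂ : Matrix m r ℝ}
    (hB : IsUnit B.det) {M : Matrix (m ⊕ (m ⊕ r)) (m ⊕ (m ⊕ r)) ℝ} (hM : M.PosSemidef)
    (hker : ∀ x, symmetricDilation (fromCols B B₂) *ᵥ x = 0 → M *ᵥ x = 0)
    (hsup : LinearMap.ker (symmetricDilation (fromCols B B₂) - M).mulVecLin ⊔
      LinearMap.ker (symmetricDilation (fromCols B B₂) + M).mulVecLin = ⊤)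
    (v p : m → ℝ) (q : r → ℝ) :
    let M₂ := M.submatrix Sum.inl (Sum.inr ∘ Sum.inl)
    let M₃ := M.submatrix (Sum.inr ∘ Sum.inl) (Sum.inr ∘ Sum.inl)
    ((symmetricDilation (fromCols B B₂) + M) *ᵥ Sum.elim v (Sum.elim p q) = 0 ↔
        B *ᵥ p + B₂ *ᵥ q = -(B * M₃⁻¹ * (B + M₂)ᵀ) *ᵥ v) ∧
      ((symmetricDilation (fromCols B B₂) - M) *ᵥ Sum.elim v (Sum.elim p q) = 0 ↔
        B *ᵥ p + B₂ *ᵥ q = (B * M₃⁻¹ * (B - M₂)ᵀ) *ᵥ v) := by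
  intro M₂ M₃
  set N := M.submatrix (Sum.map id Sum.inl) (Sum.map id Sum.inl)
  set K := B⁻¹ * B₂
  have hK : B * K = B₂ := mul_nonsing_inv_cancel_left B B₂ hB
  have hPE := collapse_mul_one_submatrix K
  have hA :
      symmetricDilation (fromCols B B₂) = (collapse K)ᵀ * symmetricDilation B * collapse K := by
    rw [← hK, symmetricDilation_fromCols_mul]
  have hMN : M = (collapse K)ᵀ * N * collapse K :=
    eq_transpose_mul_submatrix_mul_of_ker_le (isHermitian_iff_isSymm.1 hM.isHermitian) hPE
      fun x hx => hker x (by rw [hA, ← mulVec_mulVec, hx, mulVec_zero])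
  have hadd : symmetricDilation (fromCols B B₂) + M =
      (collapse K)ᵀ * (symmetricDilation B + N) * collapse K := by
    rw [Matrix.mul_add, Matrix.add_mul, ← hA, ← hMN]
  have hsub : symmetricDilation (fromCols B B₂) - M =
      (collapse K)ᵀ * (symmetricDilation B - N) * collapse K := by
    rw [Matrix.mul_sub, Matrix.sub_mul, ← hA, ← hMN]
  rw [hadd, hsub] at hsup ⊢
  have hsupN := ker_sup_eq_top_of_transpose_mul_mul hPE hsup
  have hN : N.PosSemidef := hM.submatrix _
  have hBinj : ∀ a b : m → ℝ, B *ᵥ a = B *ᵥ b ↔ a = b := fun _ _ =>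
    (mulVec_injective_iff_isUnit.2 ((isUnit_iff_isUnit_det B).2 hB)).eq_iff
  have hBu : B *ᵥ (p + K *ᵥ q) = B *ᵥ p + B₂ *ᵥ q := by rw [mulVec_add, mulVec_mulVec, hK]
  simp only [transpose_mul_mul_mulVec_eq_zero_iff hPE, collapse_mulVec]
  constructor
  · rw [symmetricDilation_add_mulVec_eq_zero_iff B hN hB hsupN, ← hBinj, hBu, mulVec_mulVec,
      Matrix.mul_neg, Matrix.mul_assoc]
    exact Iff.rfl
  · rw [symmetricDilation_sub_mulVec_eq_zero_iff B hN hB hsupN, ← hBinj, hBu, mulVec_mulVec,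
      Matrix.mul_assoc]
    exact Iff.rfl

end Reduction

section Elasticity

variable {lam mu : ℝ}

lemma Cpow_add (h₁ : 0 < 2 * mu) (h₂ : 0 < 2 * mu + 3 * lam) (γ δ : ℝ) :
    Cpow lam mu (γ + δ) = Cpow lam mu γ * Cpow lam mu δ := by
  have ha := Real.rpow_add h₁ γ δ
  have hb := Real.rpow_add h₂ γ δ
  ext i j
  fin_cases i <;> fin_cases j <;> simp [Cpow, mul_apply, Fin.sum_univ_three] <;>
    first
      | linear_combination (2 / 3) * ha + (1 / 3) * hb
      | linear_combination (-1 / 3) * ha + (1 / 3) * hb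

lemma Cpow_zero : Cpow lam mu 0 = 1 := by
  ext i j
  fin_cases i <;> fin_cases j <;> norm_num [Cpow, one_apply]

lemma Ap_eq_neg_diagonal_mul_Cpow (ν : Fin 3 → ℝ) :
    Ap lam mu ν = -diagonal ν * Cpow lam mu (1 / 2) := by
  ext i j
  fin_cases i <;> fin_cases j <;>
    simp [Ap, Cpow, alph, bet, Real.sqrt_eq_rpow, mul_apply, Fin.sum_univ_three, diagonal]

lemma Ap_mul_Cpow_neg_half (h₁ : 0 < 2 * mu) (h₂ : 0 < 2 * mu + 3 * lam) (ν : Fin 3 → ℝ) :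
    Ap lam mu ν * Cpow lam mu (-(1 / 2)) = -diagonal ν := by
  rw [Ap_eq_neg_diagonal_mul_Cpow, Matrix.mul_assoc, ← Cpow_add h₁ h₂, add_neg_cancel, Cpow_zero,
    Matrix.mul_one]

lemma isUnit_det_Ap (h₁ : 0 < 2 * mu) (h₂ : 0 < 2 * mu + 3 * lam) {ν : Fin 3 → ℝ}
    (hν : ∀ i, ν i ≠ 0) : IsUnit (Ap lam mu ν).det := by
  refine isUnit_of_mul_isUnit_left (y := (Cpow lam mu (-(1 / 2))).det) ?_
  rw [← det_mul, Ap_mul_Cpow_neg_half h₁ h₂, det_neg, det_diagonal]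
  exact (isUnit_one.neg.pow _).mul
    (isUnit_iff_ne_zero.2 (Finset.prod_ne_zero_iff.2 fun i _ => hν i))

lemma Ap_mulVec_add_App_mulVec (h₁ : 0 < 2 * mu) (h₂ : 0 < 2 * mu + 3 * lam) (hmu : 0 < mu)
    (ν : Fin 3 → ℝ) {σ : Matrix (Fin 3) (Fin 3) ℝ} (hσ : σ.IsSymm) :
    Ap lam mu ν *ᵥ (Cpow lam mu (-(1 / 2)) *ᵥ ![σ 0 0, σ 1 1, σ 2 2]) +
      App mu ν *ᵥ (fun i => mu ^ (-(1 / 2) : ℝ) * ![σ 0 1, σ 0 2, σ 1 2] i) = -(σ *ᵥ ν) := by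
  have hsqrt : Real.sqrt mu * mu ^ (-2⁻¹ : ℝ) = 1 := by
    rw [Real.sqrt_eq_rpow, ← Real.rpow_add hmu]; norm_num
  rw [mulVec_mulVec, Ap_mul_Cpow_neg_half h₁ h₂]
  funext i
  fin_cases i <;>
    simp [App, mulVec, dotProduct, Fin.sum_univ_three, diagonal_apply, hσ.apply 0 1,
      hσ.apply 0 2, hσ.apply 1 2]
  · linear_combination (-(ν 1 * σ 0 1) - ν 2 * σ 0 2) * hsqrt
  · linear_combination (-(ν 0 * σ 0 1) - ν 2 * σ 1 2) * hsqrt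
  · linear_combination (-(ν 0 * σ 0 2) - ν 1 * σ 1 2) * hsqrt

end Elasticity

theorem stmt10_general (lam mu : ℝ) (hmu : 0 < mu) (hlm : 0 < 2 * mu + 3 * lam) (ν : Fin 3 → ℝ)
    (hν0 : ∀ i : Fin 3, ν i ≠ 0)
    (M : Matrix I9 I9 ℝ) (hM : IsAdmissible (Anu lam mu ν) M)
    (v : Fin 3 → ℝ) (σ : Matrix (Fin 3) (Fin 3) ℝ) (hσ : σ.IsSymm) :
    ((Anu lam mu ν + M).mulVec (Uvec lam mu v σ) = 0 ↔
        (Ap lam mu ν * (blk₃ M)⁻¹ * (Ap lam mu ν + blk₂ M)ᵀ).mulVec v - σ.mulVec ν = 0) ∧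
      ((Anu lam mu ν - M).mulVec (Uvec lam mu v σ) = 0 ↔
        (Ap lam mu ν * (blk₃ M)⁻¹ * (Ap lam mu ν - blk₂ M)ᵀ).mulVec v + σ.mulVec ν = 0) := by
  obtain ⟨-, hpsd, hker, hsup⟩ := hM
  have h₁ : 0 < 2 * mu := by linarith
  have hA : Anu lam mu ν = symmetricDilation (fromCols (Ap lam mu ν) (App mu ν)) := by
    rw [Anu, symmetricDilation, transpose_fromCols]
  rw [hA] at hker hsup ⊢
  obtain ⟨hadd, hsub⟩ := symmetricDilation_fromCols_mulVec_eq_zero_iff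
    (isUnit_det_Ap h₁ hlm hν0) hpsd hker hsup v _ _
  rw [Uvec, hadd, hsub, Ap_mulVec_add_App_mulVec h₁ hlm hmu ν hσ, blk₂, blk₃]
  constructor
  · rw [neg_mulVec, neg_inj, eq_comm, sub_eq_zero]
  · rw [eq_comm, eq_neg_iff_add_eq_zero]

theorem stmt10 (lam mu : ℝ) (hmu : 0 < mu) (hlm : 0 < 2 * mu + 3 * lam) (ν : Fin 3 → ℝ)
    (hν : ν 0 ^ 2 + ν 1 ^ 2 + ν 2 ^ 2 = 1)
    (hν0 : ∀ i : Fin 3, ν i ≠ 0)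
    (M : Matrix I9 I9 ℝ) (hM : IsAdmissible (Anu lam mu ν) M)
    (v : Fin 3 → ℝ) (σ : Matrix (Fin 3) (Fin 3) ℝ) (hσ : σ.IsSymm) :
    ((Anu lam mu ν + M).mulVec (Uvec lam mu v σ) = 0 ↔
        (Ap lam mu ν * (blk₃ M)⁻¹ * (Ap lam mu ν + blk₂ M)ᵀ).mulVec v - σ.mulVec ν = 0) ∧
      ((Anu lam mu ν - M).mulVec (Uvec lam mu v σ) = 0 ↔
        (Ap lam mu ν * (blk₃ M)⁻¹ * (Ap lam mu ν - blk₂ M)ᵀ).mulVec v + σ.mulVec ν = 0) :=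
  stmt10_general lam mu hmu hlm ν hν0 M hM v σ hσ
end
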